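/- The set U(ℓ^∞) of universal interpolating functions — continuous f : ℝ → ℝ such that for every bounded real sequence (x_n)_{n∈ℕ} there exists t ∈ ℝ with f(t+n) = x_n for all n — is nowhere dense in C(ℝ) with the metric d_∞(f,g) = min(‖f−g‖_∞, 1). -/

import Mathlib

open Filter Set

/-- The metric d_∞(f,g) = min(‖f−g‖_∞, 1) on functions ℝ → ℝ (value 1 if sup is infinite). -/
noncomputable def dinf (f g : ℝ → ℝ) : ℝ :=
  (min (⨆ x : ℝ, ENNReal.ofReal |f x - g x|) 1).toReal

/-- x is a bounded sequence, i.e. x ∈ ℓ^∞. -/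
def Bdd (x : ℕ → ℝ) : Prop := ∃ C : ℝ, ∀ n : ℕ, |x n| ≤ C

/-- sup_n |f(t+n) − x_n|, computed in ℝ≥0∞. -/
noncomputable def gapSup (f : ℝ → ℝ) (x : ℕ → ℝ) (t : ℝ) : ENNReal :=
  ⨆ n : ℕ, ENNReal.ofReal |f (t + n) - x n|

/-- f ∈ U(X): f is an X-universal interpolating function. -/
def memU (X : Set (ℕ → ℝ)) (f : ℝ → ℝ) : Prop :=
  Continuous f ∧ ∀ x ∈ X, ∃ t : ℝ, ∀ n : ℕ, f (t + n) = x n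

/-- f ∈ U_N(X): f is nearly X-universal. -/
def memUN (X : Set (ℕ → ℝ)) (f : ℝ → ℝ) : Prop :=
  Continuous f ∧ ∀ x ∈ X, (⨅ t : ℝ, gapSup f x t) = 0

/-- f is piecewise affine with locally finitely many breakpoints. -/
def PWAffine (f : ℝ → ℝ) : Prop :=
  ∃ z : ℤ → ℝ, StrictMono z ∧ Tendsto z atTop atTop ∧ Tendsto z atBot atBot ∧
    ∀ n : ℤ, ∃ a b : ℝ, ∀ x ∈ Set.Icc (z n) (z (n + 1)), f x = a * x + b

/-- span(𝟏): the set of constant sequences. -/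
def spanOne : Set (ℕ → ℝ) := {x | ∃ c : ℝ, x = fun _ => c}

/-- dist(x, span(𝟏)) computed in ℝ≥0∞. -/
noncomputable def distSpanOne (x : ℕ → ℝ) : ENNReal :=
  ⨅ c : ℝ, ⨆ n : ℕ, ENNReal.ofReal |x n - c|


/-!
A function in `U(ℓ^∞)` interpolates the zero sequence, so it vanishes along some progression
`t + ℕ`. It therefore suffices to perturb `f` by at most `4δ` into a `g` such that every
progression `t + ℕ` meets `{|g| ≥ δ}`: this persists on the `δ`-ball around `g`.

On each block `[2j, 2j + 2]`, cut into an odd number `M` of cells on which `f` oscillates by at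
most `δ`, add `8δ` times the distance of the phase `M (x - 2j) / 2` to `ℤ`, signed on each cell by
the sign of `f` at the cell's midpoint. Wherever that distance is at least `1/4`, this pushes
`|g|` above `δ`. As `M` is odd, the phases at `x` and `x + 1` differ by `1/2` modulo `1`,
so at one of the two points the distance is at least `1/4`.
-/

open Topology

lemma dinf_le_of_forall_abs_sub_le {f g : ℝ → ℝ} {c : ℝ} (hc : 0 ≤ c)
    (h : ∀ x, |f x - g x| ≤ c) : dinf f g ≤ c := by
  have hsup : (⨆ x, ENNReal.ofReal |f x - g x|) ≤ ENNReal.ofReal c :=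
    iSup_le fun x => ENNReal.ofReal_le_ofReal (h x)
  calc dinf f g ≤ (ENNReal.ofReal c).toReal :=
        ENNReal.toReal_mono ENNReal.ofReal_ne_top ((min_le_left _ _).trans hsup)
    _ = c := ENNReal.toReal_ofReal hc

lemma abs_sub_lt_of_dinf_lt {f g : ℝ → ℝ} {δ : ℝ} (hδ : δ ≤ 1) (h : dinf f g < δ) (x : ℝ) :
    |f x - g x| < δ := by
  by_contra! hx
  have hle : ENNReal.ofReal δ ≤ min (⨆ x, ENNReal.ofReal |f x - g x|) 1 :=
    le_min ((ENNReal.ofReal_le_ofReal hx).trans (le_iSup (fun x => ENNReal.ofReal |f x - g x|) x))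
      (ENNReal.ofReal_le_one.2 hδ)
  have := ENNReal.toReal_mono (ne_top_of_le_ne_top ENNReal.one_ne_top (min_le_right _ _)) hle
  rw [ENNReal.toReal_ofReal'] at this
  exact h.not_ge ((le_max_left δ 0).trans this)

noncomputable def zigzag (y : ℝ) : ℝ := min (Int.fract y) (1 - Int.fract y)

lemma continuous_zigzag : Continuous zigzag :=
  (continuous_id.min (continuous_const.sub continuous_id)).continuousOn.comp_fract'' (by norm_num)

lemma zigzag_nonneg (y : ℝ) : 0 ≤ zigzag y :=
  le_min (Int.fract_nonneg y) (sub_nonneg.2 (Int.fract_lt_one y).le)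

lemma zigzag_le_half (y : ℝ) : zigzag y ≤ 1 / 2 := by
  unfold zigzag; rcases min_choice (Int.fract y) (1 - Int.fract y) with h | h <;> grind

lemma zigzag_add_intCast (y : ℝ) (n : ℤ) : zigzag (y + n) = zigzag y := by
  simp [zigzag]

lemma zigzag_add_natCast (y : ℝ) (n : ℕ) : zigzag (y + n) = zigzag y := by
  simp [zigzag]

lemma zigzag_of_mem_Ico {y : ℝ} (hy : y ∈ Ico (0 : ℝ) 1) : zigzag y = min y (1 - y) := by
  rw [zigzag, Int.fract_eq_self.2 hy]

lemma quarter_le_zigzag_or_add_half (y : ℝ) : 1 / 4 ≤ zigzag y ∨ 1 / 4 ≤ zigzag (y + 1 / 2) := by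
  have hy : y = Int.fract y + ⌊y⌋ := (Int.fract_add_floor y).symm
  have h0 := Int.fract_nonneg y
  have h1 := Int.fract_lt_one y
  rw [hy, add_right_comm, zigzag_add_intCast, zigzag_add_intCast,
    zigzag_of_mem_Ico ⟨h0, h1⟩]
  rcases lt_or_ge (Int.fract y) (1 / 4) with hlow | hlow
  · right
    rw [zigzag_of_mem_Ico ⟨by linarith, by linarith⟩]
    exact le_min (by linarith) (by linarith)
  rcases le_or_gt (Int.fract y) (3 / 4) with hhigh | hhigh
  · exact Or.inl (le_min (by linarith) (by linarith))
  · right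
    have : Int.fract y + 1 / 2 = (Int.fract y - 1 / 2) + ((1 : ℤ) : ℝ) := by push_cast; ring
    rw [this, zigzag_add_intCast, zigzag_of_mem_Ico ⟨by linarith, by linarith⟩]
    exact le_min (by linarith) (by linarith)

lemma continuous_mul_of_abs_le_of_continuousAt {X : Type*} [TopologicalSpace X] {s φ : X → ℝ}
    {C : ℝ} (hφ : Continuous φ) (hs : ∀ x, |s x| ≤ C) (hsφ : ∀ x, φ x ≠ 0 → ContinuousAt s x) :
    Continuous fun x => s x * φ x := by
  refine continuous_iff_continuousAt.2 fun x => ?_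
  by_cases hx : φ x = 0
  · have hlim : Tendsto (fun y => C * |φ y|) (𝓝 x) (𝓝 0) := by
      simpa [hx] using ((hφ.tendsto x).abs.const_mul C)
    rw [ContinuousAt, hx, mul_zero]
    refine squeeze_zero_norm (fun y => ?_) hlim
    rw [Real.norm_eq_abs, abs_mul]
    exact mul_le_mul_of_nonneg_right (hs y) (abs_nonneg _)
  · exact (hsφ x hx).mul hφ.continuousAt

lemma continuousAt_comp_floor_of_fract_ne_zero {α : Type*} [TopologicalSpace α] (σ : ℤ → α) {y : ℝ}
    (hy : Int.fract y ≠ 0) : ContinuousAt (fun y : ℝ => σ ⌊y⌋) y := by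
  have hlt : (⌊y⌋ : ℝ) < y := by
    have := (Int.fract_nonneg y).lt_of_ne' hy
    rw [Int.fract] at this
    linarith
  refine (continuousAt_const (y := σ ⌊y⌋)).congr ?_
  filter_upwards [Ioo_mem_nhds hlt (Int.lt_floor_add_one y)] with z hz
  rw [Int.floor_eq_iff.2 ⟨hz.1.le, hz.2⟩]

noncomputable def signedZigzag (σ : ℤ → ℝ) (y : ℝ) : ℝ := σ ⌊y⌋ * zigzag y

lemma continuous_signedZigzag {σ : ℤ → ℝ} {C : ℝ} (hσ : ∀ k, |σ k| ≤ C) :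
    Continuous (signedZigzag σ) :=
  continuous_mul_of_abs_le_of_continuousAt continuous_zigzag (fun _ => hσ _)
    fun _ hy => continuousAt_comp_floor_of_fract_ne_zero σ fun h => hy (by simp [zigzag, h])

lemma signedZigzag_eq_zero {σ : ℤ → ℝ} {N : ℤ} (hσ : ∀ k, σ k ≠ 0 → 0 ≤ k ∧ k < N) {y : ℝ}
    (hy : y ∉ Ioo (0 : ℝ) N) : signedZigzag σ y = 0 := by
  rw [mem_Ioo, not_and_or, not_lt, not_lt] at hy
  rcases hy with hy | hy
  · rcases hy.lt_or_eq with hy | rfl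
    · have : σ ⌊y⌋ = 0 := by_contra fun h => by linarith [Int.floor_nonneg.1 (hσ _ h).1]
      rw [signedZigzag, this, zero_mul]
    · simp [signedZigzag, zigzag]
  · have : σ ⌊y⌋ = 0 := by_contra fun h => absurd (Int.le_floor.2 hy) (not_le.2 (hσ _ h).2)
    rw [signedZigzag, this, zero_mul]

/-- `[a, a + 2]` is cut into the `M` cells `[a + 2k / M, a + 2(k + 1) / M]`, on which the phase
`M (x - a) / 2` of `blockPerturbation` has integer part `k`; `a + (2k + 1) / M` is the midpoint. -/
noncomputable def cellSign (f : ℝ → ℝ) (a : ℝ) (M : ℕ) (k : ℤ) : ℝ :=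
  if 0 ≤ k ∧ k < M then (if 0 ≤ f (a + (2 * k + 1) / M) then 1 else -1) else 0

noncomputable def blockPerturbation (f : ℝ → ℝ) (a δ : ℝ) (M : ℕ) (x : ℝ) : ℝ :=
  8 * δ * signedZigzag (cellSign f a M) (M * (x - a) / 2)

section blockPerturbation

variable (f : ℝ → ℝ) (a : ℝ) {δ : ℝ} (M : ℕ)

lemma abs_cellSign_le_one (k : ℤ) : |cellSign f a M k| ≤ 1 := by
  unfold cellSign; split_ifs <;> norm_num

lemma continuous_blockPerturbation : Continuous (blockPerturbation f a δ M) :=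
  continuous_const.mul ((continuous_signedZigzag (abs_cellSign_le_one f a M)).comp (by fun_prop))

lemma abs_blockPerturbation_le (hδ : 0 ≤ δ) (x : ℝ) : |blockPerturbation f a δ M x| ≤ 4 * δ := by
  rw [blockPerturbation, signedZigzag, abs_mul, abs_of_nonneg (by positivity : 0 ≤ 8 * δ),
    abs_mul, abs_of_nonneg (zigzag_nonneg _)]
  have := mul_le_mul (abs_cellSign_le_one f a M ⌊M * (x - a) / 2⌋)
    (zigzag_le_half (M * (x - a) / 2)) (zigzag_nonneg _) zero_le_one
  nlinarith

lemma blockPerturbation_eq_zero {x : ℝ} (hx : x ∉ Ioo a (a + 2)) :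
    blockPerturbation f a δ M x = 0 := by
  have hσ : ∀ k, cellSign f a M k ≠ 0 → 0 ≤ k ∧ k < M := fun k hk => by
    by_contra h; exact hk (if_neg h)
  rw [blockPerturbation, signedZigzag_eq_zero hσ, mul_zero]
  rw [mem_Ioo, not_and_or, not_lt, not_lt] at hx
  rw [mem_Ioo, not_and_or, not_lt, not_lt, Int.cast_natCast]
  have hM : (0 : ℝ) ≤ M := M.cast_nonneg
  rcases hx with hx | hx
  · left; nlinarith
  · right; nlinarith

lemma le_abs_add_blockPerturbation (hM : 0 < M)
    (hosc : ∀ x ∈ Icc a (a + 2), ∀ y ∈ Icc a (a + 2), |x - y| ≤ 1 / M → |f x - f y| ≤ δ)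
    {x : ℝ} (hx : x ∈ Ico a (a + 2)) (hz : 1 / 4 ≤ zigzag (M * (x - a) / 2)) :
    δ ≤ |f x + blockPerturbation f a δ M x| := by
  set z := (M : ℝ) * (x - a) / 2 with hz_def
  have hMpos : (0 : ℝ) < M := Nat.cast_pos.2 hM
  have hz0 : 0 ≤ z := by rw [hz_def]; nlinarith [hx.1]
  have hzM : z < M := by rw [hz_def]; nlinarith [hx.2]
  have hk0 : 0 ≤ ⌊z⌋ := Int.floor_nonneg.2 hz0
  have hkM : ⌊z⌋ < M := Int.floor_lt.2 (by exact_mod_cast hzM)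
  set s := a + (2 * ⌊z⌋ + 1) / M
  have hkM' : (⌊z⌋ : ℝ) + 1 ≤ M := by exact_mod_cast hkM
  have hk0' : (0 : ℝ) ≤ ⌊z⌋ := by exact_mod_cast hk0
  have hs : s ∈ Icc a (a + 2) := by
    constructor
    · have : 0 ≤ (2 * ⌊z⌋ + 1 : ℝ) / M := by positivity
      linarith
    · have : (2 * ⌊z⌋ + 1 : ℝ) / M ≤ 2 := (div_le_iff₀ hMpos).2 (by linarith)
      linarith
  have hxs : |x - s| ≤ 1 / M := by
    have hfr := Int.fract_nonneg z
    have hfr1 := Int.fract_lt_one z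
    have : x - s = (2 * Int.fract z - 1) / M := by
      simp only [s, Int.fract, hz_def]; field_simp; ring
    rw [this, abs_div, abs_of_pos hMpos]
    exact div_le_div_of_nonneg_right (abs_le.2 ⟨by linarith, by linarith⟩) hMpos.le
  have hfx := abs_le.1 (hosc x (Ico_subset_Icc_self hx) s hs hxs)
  have hσ : cellSign f a M ⌊z⌋ = if 0 ≤ f s then 1 else -1 := if_pos ⟨hk0, hkM⟩
  rw [blockPerturbation, signedZigzag, hσ]
  split_ifs with hfs
  · exact le_abs.2 (Or.inl (by nlinarith))
  · exact le_abs.2 (Or.inr (by nlinarith))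

end blockPerturbation

lemma exists_block_perturbation {f : ℝ → ℝ} (hf : Continuous f) (a : ℝ) {δ : ℝ} (hδ : 0 < δ) :
    ∃ Q : ℝ → ℝ, Continuous Q ∧ (∀ x, |Q x| ≤ 4 * δ) ∧ (∀ x ∉ Ioo a (a + 2), Q x = 0) ∧
      ∀ x ∈ Ico a (a + 1), δ ≤ |f x + Q x| ∨ δ ≤ |f (x + 1) + Q (x + 1)| := by
  obtain ⟨η, hη, hmod⟩ := Metric.uniformContinuousOn_iff_le.1
    ((isCompact_Icc (a := a) (b := a + 2)).uniformContinuousOn_of_continuous hf.continuousOn) δ hδ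
  set m := ⌈1 / η⌉₊
  have hosc : ∀ x ∈ Icc a (a + 2), ∀ y ∈ Icc a (a + 2),
      |x - y| ≤ 1 / ((2 * m + 1 : ℕ) : ℝ) → |f x - f y| ≤ δ := by
    refine fun x hx y hy hxy => hmod x hx y hy (hxy.trans ?_)
    have hm : 1 / η ≤ m := Nat.le_ceil _
    rw [div_le_iff₀ hη] at hm
    rw [div_le_iff₀ (by positivity)]
    push_cast
    nlinarith
  refine ⟨blockPerturbation f a δ (2 * m + 1), continuous_blockPerturbation f a _,
    abs_blockPerturbation_le f a _ hδ.le, fun x hx => blockPerturbation_eq_zero f a _ hx,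
    fun x hx => ?_⟩
  have hphase : ((2 * m + 1 : ℕ) : ℝ) * (x + 1 - a) / 2 =
      (2 * m + 1 : ℕ) * (x - a) / 2 + 1 / 2 + m := by
    push_cast; ring
  rcases quarter_le_zigzag_or_add_half ((2 * m + 1 : ℕ) * (x - a) / 2) with h | h
  · exact Or.inl (le_abs_add_blockPerturbation f a _ (by omega) hosc ⟨hx.1, by linarith [hx.2]⟩ h)
  · refine Or.inr (le_abs_add_blockPerturbation f a _ (by omega) hosc
      ⟨by linarith [hx.1], by linarith [hx.2]⟩ ?_)
    rwa [hphase, zigzag_add_natCast]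

lemma exists_nat_add_mem_Ico {t a : ℝ} (h : t ≤ a) : ∃ n : ℕ, t + n ∈ Ico a (a + 1) :=
  ⟨⌈a - t⌉₊, by linarith [Nat.le_ceil (a - t)], by linarith [Nat.ceil_lt_add_one (sub_nonneg.2 h)]⟩

theorem exists_perturbation_away_from_zero_on_progressions {f : ℝ → ℝ} (hf : Continuous f) {δ : ℝ}
    (hδ : 0 < δ) : ∃ q : ℝ → ℝ, Continuous q ∧ (∀ x, |q x| ≤ 4 * δ) ∧
      ∀ t : ℝ, ∃ n : ℕ, δ ≤ |f (t + n) + q (t + n)| := by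
  choose Q hQc hQb hQ0 hQf using fun j : ℤ => exists_block_perturbation hf (2 * j) hδ
  have hlf : LocallyFinite fun j => Function.support (Q j) := by
    refine (locallyFinite_Ioo_of_tendsto (l := fun j : ℤ => 2 * (j : ℝ)) (u := fun j => 2 * j + 2)
      ?_ ?_).subset fun j x hx => by_contra fun h => hx (hQ0 j x h)
    · exact tendsto_intCast_atTop_atTop.const_mul_atTop two_pos
    · exact tendsto_atBot_add_const_right _ _
        ((tendsto_intCast_atBot_iff.2 tendsto_id).const_mul_atBot two_pos)
  have heval : ∀ j : ℤ, ∀ x ∈ Icc (2 * (j : ℝ)) (2 * j + 2), ∑ᶠ i, Q i x = Q j x := by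
    refine fun j x hx => finsum_eq_single _ j fun i hij => hQ0 i x fun hi => hij ?_
    have h1 : (i : ℝ) < j + 1 := by linarith [hi.1, hx.2]
    have h2 : (j : ℝ) < i + 1 := by linarith [hi.2, hx.1]
    have : i < j + 1 := by exact_mod_cast h1
    have : j < i + 1 := by exact_mod_cast h2
    omega
  refine ⟨fun x => ∑ᶠ j, Q j x, continuous_finsum hQc hlf, fun x => ?_, fun t => ?_⟩
  · dsimp only
    rw [heval ⌊x / 2⌋ x
      ⟨by linarith [Int.floor_le (x / 2)], by linarith [Int.lt_floor_add_one (x / 2)]⟩]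
    exact hQb _ x
  · obtain ⟨n, hn⟩ := exists_nat_add_mem_Ico (by linarith [Int.le_ceil (t / 2)] :
      t ≤ 2 * (⌈t / 2⌉ : ℝ))
    dsimp only
    rcases hQf _ _ hn with h | h
    · exact ⟨n, by rwa [heval _ _ ⟨hn.1, by linarith [hn.2]⟩]⟩
    · refine ⟨n + 1, ?_⟩
      rwa [Nat.cast_succ, ← add_assoc, heval _ _ ⟨by linarith [hn.1], by linarith [hn.2]⟩]

/-- U(ℓ^∞) is nowhere dense in (C(ℝ), d_∞). -/
theorem stmt10 :
    ∀ f : ℝ → ℝ, Continuous f → ∀ ε > (0 : ℝ),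
      ∃ g : ℝ → ℝ, Continuous g ∧ dinf f g < ε ∧
        ∃ δ > (0 : ℝ), ∀ h : ℝ → ℝ, Continuous h → dinf g h < δ →
          ¬ memU {x | Bdd x} h := by
  intro f hf ε hε
  obtain ⟨δ, hδ, hδε, hδ1⟩ : ∃ δ : ℝ, 0 < δ ∧ 4 * δ < ε ∧ δ ≤ 1 :=
    ⟨min ε 1 / 5, by positivity, by linarith [min_le_left ε 1, lt_min hε one_pos],
      by linarith [min_le_right ε 1]⟩
  obtain ⟨q, hqc, hqb, hfq⟩ := exists_perturbation_away_from_zero_on_progressions hf hδ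
  refine ⟨fun x => f x + q x, hf.add hqc, ?_, δ, hδ, fun h _ hgh hU => ?_⟩
  · refine (dinf_le_of_forall_abs_sub_le (c := 4 * δ) (by positivity) fun x => ?_).trans_lt hδε
    simpa using hqb x
  · obtain ⟨t, ht⟩ := hU.2 0 ⟨0, fun n => by simp⟩
    obtain ⟨n, hn⟩ := hfq t
    have := abs_sub_lt_of_dinf_lt hδ1 hgh (t + n)
    rw [ht n, Pi.zero_apply, sub_zero] at this
    exact this.not_ge hn
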